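/- arXiv:2007.02782 — 2 statements merged into one kernel-verified Lean document; each statement's English description precedes it below -/
import Mathlib

section
/- Let p be a prime, ω ∈ ℂ a primitive p-th root of unity, A an m×n matrix over ℤ/p and b ∈ (ℤ/p)^m. For each row i with V_i nonempty, in the quotient *-algebra ℂΓ(A,b)/⟨J − ω·1⟩ one has ∑_{x∈S_i(A,b)} ∏_{j∈V_i} f_j(x_j) = 1, where f_j(s) := (1/p)·∑_{t=0}^{p-1} (ω^{-s} g_j)^t. -/
set_option maxHeartbeats 1000000
noncomputable section

/-! ### The conjugate-linear star structure on a monoid algebra `ℂ[M]`,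
where `M` is a monoid with an (anti-multiplicative) star operation.
For a group `G` (with `star = ⁻¹`, see below) this is the usual star structure
`(λ·g)* = conj(λ)·g⁻¹` on the group `*`-algebra `ℂG`. -/

section MonoidAlgebraStar

variable {M : Type*} [Monoid M] [StarMul M]

/-- the star operation on `ℂ[M]`: `(λ·m)* = conj(λ)·(star m)` -/
noncomputable def mstar (f : MonoidAlgebra ℂ M) : MonoidAlgebra ℂ M :=
  MonoidAlgebra.ofCoeff <| Finsupp.equivMapDomain ⟨star, star, star_involutive, star_involutive⟩
    (Finsupp.mapRange (starRingEnd ℂ) (map_zero _) f.coeff)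

lemma mstar_apply (f : MonoidAlgebra ℂ M) (x : M) :
    (mstar f).coeff x = starRingEnd ℂ (f.coeff (star x)) := rfl

lemma mstar_single (a : M) (c : ℂ) :
    mstar (MonoidAlgebra.single a c) = MonoidAlgebra.single (star a) (starRingEnd ℂ c) := by
  classical
  ext x
  show starRingEnd ℂ ((Finsupp.single a c) (star x)) =
    (Finsupp.single (star a) (starRingEnd ℂ c)) x
  simp only [Finsupp.single_apply]
  by_cases h : a = star x
  · rw [if_pos h, if_pos (by rw [h, star_star])]
  · rw [if_neg h, if_neg (fun h2 => h (by rw [← h2, star_star])), map_zero]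

lemma mstar_add (f g : MonoidAlgebra ℂ M) : mstar (f + g) = mstar f + mstar g := by
  ext x
  exact map_add (starRingEnd ℂ) (f.coeff (star x)) (g.coeff (star x))

lemma mstar_zero : mstar (0 : MonoidAlgebra ℂ M) = 0 := by
  ext x
  exact map_zero (starRingEnd ℂ)

lemma mstar_mul (f g : MonoidAlgebra ℂ M) : mstar (f * g) = mstar g * mstar f := by
  induction f using MonoidAlgebra.induction_linear with
  | zero =>
      exact (congrArg mstar (zero_mul g)).trans (mstar_zero.trans
        ((mul_zero (mstar g)).symm.trans (congrArg _ mstar_zero.symm)))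
  | add f1 f2 h1 h2 =>
      refine Eq.trans (congrArg mstar (@add_mul (MonoidAlgebra ℂ M) _ _ _ f1 f2 g)) ?_
      rw [mstar_add, h1, h2, ← mul_add]
      exact congrArg (mstar g * ·) (mstar_add f1 f2).symm
  | single a c =>
    induction g using MonoidAlgebra.induction_linear with
    | zero =>
        exact (congrArg mstar (mul_zero _)).trans (mstar_zero.trans
          ((zero_mul _).symm.trans (congrArg (· * _) mstar_zero.symm)))
    | add g1 g2 h1 h2 =>
        refine Eq.trans (congrArg mstar (@mul_add (MonoidAlgebra ℂ M) _ _ _ _ g1 g2)) ?_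
        rw [mstar_add, h1, h2, ← add_mul]
        exact congrArg (· * mstar (MonoidAlgebra.single a c)) (mstar_add g1 g2).symm
    | single b d =>
      show mstar ((MonoidAlgebra.single a c) * (MonoidAlgebra.single b d)) =
        mstar (MonoidAlgebra.single b d) * mstar (MonoidAlgebra.single a c)
      rw [MonoidAlgebra.single_mul_single, mstar_single, mstar_single, mstar_single,
        MonoidAlgebra.single_mul_single, star_mul, map_mul, mul_comm (starRingEnd ℂ d)]

/-- the `*`-ring structure of `ℂ[M]` -/
noncomputable instance instMAStar : StarRing (MonoidAlgebra ℂ M) where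
  star := mstar
  star_involutive f := by
    ext x
    calc (mstar (mstar f)).coeff x = starRingEnd ℂ (starRingEnd ℂ (f.coeff (star (star x)))) := rfl
      _ = f.coeff (star (star x)) := Complex.conj_conj _
      _ = f.coeff x := congrArg (fun y => f.coeff y) (star_star x)
  star_mul := mstar_mul
  star_add := mstar_add

lemma star_of' (a : M) :
    star (MonoidAlgebra.of ℂ M a) = MonoidAlgebra.of ℂ M (star a) := by
  show mstar _ = _
  rw [show (MonoidAlgebra.of ℂ M a : MonoidAlgebra ℂ M) = MonoidAlgebra.single a 1 from rfl,
    mstar_single, map_one]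
  rfl

end MonoidAlgebraStar

/-- On a group, `star g = g⁻¹`; together with the above this makes `ℂG` a group `*`-algebra
with `(λ·g)* = conj(λ)·g⁻¹`. -/
instance groupStar {G : Type*} [Group G] : StarMul G where
  star := (·⁻¹)
  star_involutive := inv_inv
  star_mul := mul_inv_rev

lemma star_grp {G : Type*} [Group G] (g : G) : star g = g⁻¹ := rfl

section LinearSystem

variable {p m n : ℕ}

/-- `V_i`, the support of the `i`-th row of `A` -/
def Vset (A : Matrix (Fin m) (Fin n) (ZMod p)) (i : Fin m) : Finset (Fin n) :=
  Finset.univ.filter fun j => A i j ≠ 0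

/-- `S_i(A,b)`: solutions of the `i`-th equation supported inside `V_i` -/
def Ssol [NeZero p] (A : Matrix (Fin m) (Fin n) (ZMod p)) (b : Fin m → ZMod p) (i : Fin m) :
    Finset (Fin n → ZMod p) :=
  Finset.univ.filter fun x => (∑ j, A i j * x j) = b i ∧ ∀ j, x j ≠ 0 → j ∈ Vset A i

/-- `(x,y)` are incompatible solutions for rows `(i,k)` -/
def Incompat (A : Matrix (Fin m) (Fin n) (ZMod p)) (i k : Fin m)
    (x y : Fin n → ZMod p) : Prop :=
  ∃ j ∈ Vset A i ∩ Vset A k, x j ≠ y j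

lemma Incompat.symm {A : Matrix (Fin m) (Fin n) (ZMod p)} {i k : Fin m}
    {x y : Fin n → ZMod p} (h : Incompat A i k x y) : Incompat A k i y x := by
  obtain ⟨j, hj, hne⟩ := h
  exact ⟨j, by simpa [Finset.mem_inter, and_comm] using hj, hne.symm⟩

end LinearSystem

open scoped commutatorElement

section SolutionGroup

variable {p m n : ℕ}

/-- the relators of the solution group `Γ(A,b)`; the generator `none` plays the role of `J`
and `some j` plays the role of `g_j`.  The relators are `g_j^p`, `J^p`, `[g_j, J]`,
`[g_j, g_ℓ]` for `j,ℓ ∈ V_i`, and `(∏_j g_j^{A_{i,j}})·J^{-b_i}`. -/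
def solRels (p : ℕ) (A : Matrix (Fin m) (Fin n) (ZMod p)) (b : Fin m → ZMod p) :
    Set (FreeGroup (Option (Fin n))) :=
  { w | (∃ j : Fin n, w = FreeGroup.of (some j) ^ p)
    ∨ w = FreeGroup.of (none : Option (Fin n)) ^ p
    ∨ (∃ j : Fin n, w = ⁅FreeGroup.of (some j), FreeGroup.of (none : Option (Fin n))⁆)
    ∨ (∃ i : Fin m, ∃ j l : Fin n, j ∈ Vset A i ∧ l ∈ Vset A i ∧
        w = ⁅FreeGroup.of (some j), FreeGroup.of (some l)⁆)
    ∨ (∃ i : Fin m,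
        w = ((List.finRange n).map fun j => FreeGroup.of (some j) ^ ((A i j).val)).prod *
          FreeGroup.of (none : Option (Fin n)) ^ (-(((b i).val : ℤ)))) }

/-- the solution group `Γ(A,b)` -/
abbrev SolutionGroup (p : ℕ) (A : Matrix (Fin m) (Fin n) (ZMod p)) (b : Fin m → ZMod p) :=
  PresentedGroup (solRels p A b)

/-- the generator `g_j` of the solution group -/
def gj {p : ℕ} {A : Matrix (Fin m) (Fin n) (ZMod p)} {b : Fin m → ZMod p} (j : Fin n) :
    SolutionGroup p A b := PresentedGroup.of (some j)

/-- the central generator `J` of the solution group -/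
def Jgen {p : ℕ} {A : Matrix (Fin m) (Fin n) (ZMod p)} {b : Fin m → ZMod p} :
    SolutionGroup p A b := PresentedGroup.of none

/-- `J` as an element of the group `*`-algebra `ℂΓ(A,b)` -/
noncomputable def Jga (p : ℕ) (A : Matrix (Fin m) (Fin n) (ZMod p)) (b : Fin m → ZMod p) :
    MonoidAlgebra ℂ (SolutionGroup p A b) :=
  MonoidAlgebra.of ℂ _ Jgen

/-- the relation generating the two-sided `*`-ideal `⟨J - ω·1⟩` of `ℂΓ(A,b)` -/
inductive QuotRel (ω : ℂ) (p : ℕ) (A : Matrix (Fin m) (Fin n) (ZMod p)) (b : Fin m → ZMod p) :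
    MonoidAlgebra ℂ (SolutionGroup p A b) → MonoidAlgebra ℂ (SolutionGroup p A b) → Prop
  | base : QuotRel ω p A b (Jga p A b - algebraMap ℂ _ ω) 0
  | star_base : QuotRel ω p A b (star (Jga p A b - algebraMap ℂ _ ω)) 0

/-- the quotient `*`-algebra `ℂΓ(A,b)/⟨J-ω·1⟩` -/
abbrev SolQuot (ω : ℂ) (p : ℕ) (A : Matrix (Fin m) (Fin n) (ZMod p)) (b : Fin m → ZMod p) :=
  RingQuot (QuotRel ω p A b)

noncomputable instance (ω : ℂ) (p : ℕ) (A : Matrix (Fin m) (Fin n) (ZMod p))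
    (b : Fin m → ZMod p) : StarRing (SolQuot ω p A b) := by
  refine RingQuot.starRing _ ?_
  intro a c h
  cases h with
  | base => rw [star_zero]; exact QuotRel.star_base
  | star_base => rw [star_zero, star_star]; exact QuotRel.base

end SolutionGroup

section Fj

variable {p m n : ℕ}

lemma PresentedGroup.rel_one {α : Type*} {rels : Set (FreeGroup α)} {r : FreeGroup α}
    (h : r ∈ rels) : PresentedGroup.mk rels r = 1 :=
  (QuotientGroup.eq_one_iff _).mpr (Subgroup.subset_normalClosure h)

/-- generators of the solution group indexed by a common row commute -/
lemma gj_commute {A : Matrix (Fin m) (Fin n) (ZMod p)} {b : Fin m → ZMod p} {i : Fin m}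
    {j l : Fin n} (hj : j ∈ Vset A i) (hl : l ∈ Vset A i) :
    Commute (gj (A := A) (b := b) j) (gj l) := by
  have hr : (⁅FreeGroup.of (some j), FreeGroup.of (some l)⁆ : FreeGroup (Option (Fin n)))
      ∈ solRels p A b := Or.inr (Or.inr (Or.inr (Or.inl ⟨i, j, l, hj, hl, rfl⟩)))
  have h1 := PresentedGroup.rel_one hr
  rw [map_commutatorElement] at h1
  exact commutatorElement_eq_one_iff_commute.mp h1

/-- the element `f_j(s) = (1/p)·∑_{t=0}^{p-1} (ω^{-s} g_j)^t` of `ℂΓ(A,b)` -/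
noncomputable def fj (ω : ℂ) {p : ℕ} {A : Matrix (Fin m) (Fin n) (ZMod p)}
    {b : Fin m → ZMod p} (j : Fin n) (s : ZMod p) : MonoidAlgebra ℂ (SolutionGroup p A b) :=
  (p : ℂ)⁻¹ • ∑ t ∈ Finset.range p,
    ((ω ^ (-(s.val : ℤ))) • MonoidAlgebra.of ℂ (SolutionGroup p A b) (gj j)) ^ t

/-- for `j, ℓ ∈ V_i` the elements `f_j(s)` and `f_ℓ(r)` of `ℂΓ(A,b)` commute -/
lemma fj_commute (ω : ℂ) {A : Matrix (Fin m) (Fin n) (ZMod p)} {b : Fin m → ZMod p} {i : Fin m}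
    {j l : Fin n} (hj : j ∈ Vset A i) (hl : l ∈ Vset A i) (s r : ZMod p) :
    Commute (fj ω (A := A) (b := b) j s) (fj ω l r) := by
  have hg : Commute ((ω ^ (-(s.val : ℤ))) • MonoidAlgebra.of ℂ (SolutionGroup p A b) (gj j))
      ((ω ^ (-(r.val : ℤ))) • MonoidAlgebra.of ℂ (SolutionGroup p A b) (gj l)) :=
    (((gj_commute hj hl).map (MonoidAlgebra.of ℂ (SolutionGroup p A b))).smul_left _).smul_right _
  exact ((Commute.sum_left _ _ _ fun t _ =>
    Commute.sum_right _ _ _ fun u _ => hg.pow_pow t u).smul_left _).smul_right _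

/-- the (well-defined) product `∏_{j ∈ V_i} f_j(x_j)` in `ℂΓ(A,b)` -/
noncomputable def fprod (ω : ℂ) {p : ℕ} (A : Matrix (Fin m) (Fin n) (ZMod p))
    (b : Fin m → ZMod p) (i : Fin m) (x : Fin n → ZMod p) :
    MonoidAlgebra ℂ (SolutionGroup p A b) :=
  (Vset A i).noncommProd (fun j => fj ω (A := A) (b := b) j (x j))
    (fun j hj l hl _ => fj_commute ω (Finset.mem_coe.mp hj) (Finset.mem_coe.mp hl) _ _)

end Fj

/-! Since `g_j ^ p = 1`, the element `f_j(s)` is the projection onto the `ω ^ s`-eigenspace of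
`g_j`, and `∑_s f_j(s) = 1` by orthogonality of the characters of `ℤ/p`. The `f_j` with
`j ∈ V_i` commute, so expanding `∏_{j ∈ V_i} ∑_s f_j(s) = 1` gives `1` as the sum of
`∏_{j ∈ V_i} f_j(x_j)` over all `x` supported in `V_i`. On such a product the row relation
`∏_j g_j ^ A_ij = J ^ b_i` acts by `ω ^ (∑_j A_ij x_j)`, while modulo `J - ω` it acts by
`ω ^ b_i`; hence the terms with `x ∉ S_i` vanish in the quotient. -/

section EigenProjection

variable {K R : Type*} [Field K] [Ring R] [Algebra K R]

lemma mul_geom_sum_of_pow_eq_one {X : R} {p : ℕ} (hX : X ^ p = 1) :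
    X * ∑ t ∈ Finset.range p, X ^ t = ∑ t ∈ Finset.range p, X ^ t := by
  have h := mul_geom_sum X p
  rwa [hX, sub_self, sub_mul, one_mul, sub_eq_zero] at h

lemma ZMod.sum_val_eq_sum_range {M : Type*} [AddCommMonoid M] (p : ℕ) [NeZero p] (f : ℕ → M) :
    ∑ s : ZMod p, f s.val = ∑ k ∈ Finset.range p, f k :=
  Finset.sum_nbij' ZMod.val (fun k => (k : ZMod p))
    (fun s _ => Finset.mem_range.mpr s.val_lt) (fun _ _ => Finset.mem_univ _)
    (fun s _ => ZMod.natCast_zmod_val s)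
    (fun _ hk => ZMod.val_cast_of_lt (Finset.mem_range.mp hk)) (fun _ _ => rfl)

def eigenProj (ω : K) (p : ℕ) (u : R) (s : ZMod p) : R :=
  (p : K)⁻¹ • ∑ t ∈ Finset.range p, (ω ^ (-(s.val : ℤ)) • u) ^ t

variable {ω : K} {p : ℕ}

lemma mul_eigenProj [NeZero p] (hω : ω ^ p = 1) {u : R} (hu : u ^ p = 1) (s : ZMod p) :
    u * eigenProj ω p u s = ω ^ s.val • eigenProj ω p u s := by
  have hω0 : ω ≠ 0 := by
    rintro rfl
    exact zero_ne_one (by rwa [zero_pow (NeZero.ne p)] at hω)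
  rw [eigenProj, mul_smul_comm, smul_comm]
  set X := ω ^ (-(s.val : ℤ)) • u
  have hX : X ^ p = 1 := by
    rw [smul_pow, hu, ← zpow_natCast, ← zpow_mul, mul_comm, zpow_mul, zpow_natCast, hω,
      one_zpow, one_smul]
  have huX : u = ω ^ s.val • X := by
    rw [smul_smul, ← zpow_natCast, ← zpow_add₀ hω0, add_neg_cancel, zpow_zero, one_smul]
  rw [huX, smul_mul_assoc, mul_geom_sum_of_pow_eq_one hX]

lemma IsPrimitiveRoot.sum_zpow_neg_val_pow [NeZero p] (hω : IsPrimitiveRoot ω p) {t : ℕ}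
    (ht : t < p) : ∑ s : ZMod p, (ω ^ (-(s.val : ℤ))) ^ t = if t = 0 then (p : K) else 0 := by
  have hpow : ∀ s : ZMod p, (ω ^ (-(s.val : ℤ))) ^ t = ((ω ^ t)⁻¹) ^ s.val := fun s => by
    rw [← zpow_natCast, ← zpow_mul, ← zpow_natCast (ω ^ t)⁻¹, inv_zpow', ← zpow_natCast ω t,
      ← zpow_mul]
    ring_nf
  simp_rw [hpow]
  rw [ZMod.sum_val_eq_sum_range p fun k => ((ω ^ t)⁻¹) ^ k]
  split_ifs with ht0
  · simp [ht0]
  · have hζ1 : (ω ^ t)⁻¹ ≠ 1 := inv_ne_one.mpr (hω.pow_ne_one_of_pos_of_lt ht0 ht)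
    rw [geom_sum_eq hζ1, inv_pow, ← pow_mul, mul_comm, pow_mul, hω.pow_eq_one, one_pow, inv_one,
      sub_self, zero_div]

lemma sum_eigenProj [NeZero p] (hω : IsPrimitiveRoot ω p) (u : R) :
    ∑ s : ZMod p, eigenProj ω p u s = 1 := by
  have hp : (p : K) ≠ 0 := (hω.neZero').out
  simp only [eigenProj, ← Finset.smul_sum, smul_pow]
  rw [Finset.sum_comm]
  simp_rw [← Finset.sum_smul]
  rw [Finset.sum_congr rfl fun t ht =>
    by rw [hω.sum_zpow_neg_val_pow (Finset.mem_range.mp ht)]]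
  simp [ite_smul, hp, NeZero.ne p]

end EigenProjection

lemma pow_mul_eq_smul_of_mul_eq_smul {K R : Type*} [CommSemiring K] [Semiring R] [Algebra K R]
    {a y : R} {c : K} (h : a * y = c • y) (k : ℕ) : a ^ k * y = c ^ k • y := by
  induction k with
  | zero => simp
  | succ k ih => rw [pow_succ', mul_assoc, ih, mul_smul_comm, h, smul_smul, pow_succ]

lemma List.prod_map_mul_eq_smul {ι K R : Type*} [CommSemiring K] [Semiring R] [Algebra K R]
    {f : ι → R} {c : ι → K} {y : R} (l : List ι) (h : ∀ j ∈ l, f j * y = c j • y) :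
    (l.map f).prod * y = (l.map c).prod • y := by
  induction l with
  | nil => simp
  | cons j l ih =>
    rw [List.map_cons, List.prod_cons, mul_assoc, ih fun k hk => h k (List.mem_cons_of_mem j hk),
      mul_smul_comm, h j List.mem_cons_self, smul_smul, List.map_cons, List.prod_cons, mul_comm]

lemma IsPrimitiveRoot.natCast_eq_natCast_of_pow_eq_pow {M : Type*} [CommMonoid M] {ω : M}
    {p : ℕ} [NeZero p] (hω : IsPrimitiveRoot ω p) {a b : ℕ} (h : ω ^ a = ω ^ b) :
    (a : ZMod p) = b := by
  rw [ZMod.natCast_eq_natCast_iff']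
  refine hω.pow_inj (Nat.mod_lt _ (NeZero.pos p)) (Nat.mod_lt _ (NeZero.pos p)) ?_
  rwa [← pow_eq_pow_mod a hω.pow_eq_one, ← pow_eq_pow_mod b hω.pow_eq_one]

section SolutionGroupRelations

variable {p m n : ℕ} {A : Matrix (Fin m) (Fin n) (ZMod p)} {b : Fin m → ZMod p}

lemma gj_pow_self (j : Fin n) : gj (A := A) (b := b) j ^ p = 1 := by
  have h := PresentedGroup.rel_one (rels := solRels p A b) (Or.inl ⟨j, rfl⟩)
  rwa [map_pow] at h

lemma prod_gj_pow_eq_Jgen_pow (i : Fin m) :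
    ((List.finRange n).map fun j => gj (A := A) (b := b) j ^ (A i j).val).prod =
      Jgen ^ (b i).val := by
  have h := PresentedGroup.rel_one (rels := solRels p A b)
    (Or.inr (Or.inr (Or.inr (Or.inr ⟨i, rfl⟩))))
  rw [map_mul, map_zpow, map_list_prod, List.map_map, mul_eq_one_iff_eq_inv, ← zpow_neg,
    neg_neg, zpow_natCast] at h
  exact h

lemma fj_eq_eigenProj (ω : ℂ) (j : Fin n) (s : ZMod p) :
    fj ω (A := A) (b := b) j s = eigenProj ω p (MonoidAlgebra.of ℂ _ (gj j)) s :=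
  rfl

lemma mkAlgHom_Jga (ω : ℂ) (A : Matrix (Fin m) (Fin n) (ZMod p)) (b : Fin m → ZMod p) :
    RingQuot.mkAlgHom ℂ (QuotRel ω p A b) (Jga p A b) = algebraMap ℂ _ ω := by
  have h := RingQuot.mkAlgHom_rel ℂ (QuotRel.base (ω := ω) (p := p) (A := A) (b := b))
  rwa [map_sub, map_zero, sub_eq_zero, AlgHom.commutes] at h

end SolutionGroupRelations

section Eigenvectors

variable {p m n : ℕ} [NeZero p] {ω : ℂ} {A : Matrix (Fin m) (Fin n) (ZMod p)}
  {b : Fin m → ZMod p} {i : Fin m}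

lemma of_gj_mul_fprod (hω : ω ^ p = 1) {j : Fin n} (hj : j ∈ Vset A i) (x : Fin n → ZMod p) :
    MonoidAlgebra.of ℂ _ (gj j) * fprod ω A b i x = ω ^ (x j).val • fprod ω A b i x := by
  classical
  rw [fprod, ← Finset.mul_noncommProd_erase (Vset A i) hj _
      fun _ hl _ hk _ => fj_commute ω (Finset.mem_coe.mp hl) (Finset.mem_coe.mp hk) _ _,
    ← mul_assoc, fj_eq_eigenProj, mul_eigenProj hω (by rw [← map_pow, gj_pow_self, map_one]),
    smul_mul_assoc]

lemma of_Jgen_pow_mul_fprod (hω : ω ^ p = 1) (x : Fin n → ZMod p) :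
    MonoidAlgebra.of ℂ _ (Jgen ^ (b i).val) * fprod ω A b i x =
      ω ^ (∑ j, (x j).val * (A i j).val) • fprod ω A b i x := by
  rw [← prod_gj_pow_eq_Jgen_pow, map_list_prod, List.map_map, ← Finset.prod_pow_eq_pow_sum,
    Fin.prod_univ_def]
  refine List.prod_map_mul_eq_smul _ fun j _ => ?_
  by_cases hj : j ∈ Vset A i
  · rw [Function.comp_apply, map_pow, pow_mul]
    exact pow_mul_eq_smul_of_mul_eq_smul (of_gj_mul_fprod hω hj x) _
  · have hA : A i j = 0 := by simpa [Vset] using hj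
    simp only [Function.comp_apply, hA, ZMod.val_zero, mul_zero, pow_zero, map_one, one_mul,
      one_smul]

lemma mkAlgHom_fprod_eq_zero (hω : IsPrimitiveRoot ω p) (x : Fin n → ZMod p)
    (hx : ∑ j, A i j * x j ≠ b i) :
    RingQuot.mkAlgHom ℂ (QuotRel ω p A b) (fprod ω A b i x) = 0 := by
  by_contra hne
  have h := congrArg (RingQuot.mkAlgHom ℂ (QuotRel ω p A b))
    (of_Jgen_pow_mul_fprod (A := A) (b := b) (i := i) hω.pow_eq_one x)
  rw [map_mul, map_pow, map_smul, map_pow, ← Jga, mkAlgHom_Jga, ← map_pow,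
    ← Algebra.smul_def] at h
  refine hx ?_
  have := hω.natCast_eq_natCast_of_pow_eq_pow (smul_left_injective ℂ hne h).symm
  push_cast [ZMod.natCast_val, ZMod.cast_id] at this
  simpa [mul_comm] using this

end Eigenvectors

section SupportedIn

variable {ι κ : Type*} [DecidableEq ι] [Fintype ι] [DecidableEq κ] [Fintype κ] [Zero κ]

def supportedIn (T : Finset ι) : Finset (ι → κ) :=
  Finset.univ.filter fun x => ∀ j, x j ≠ 0 → j ∈ T

lemma mem_supportedIn {T : Finset ι} {x : ι → κ} :
    x ∈ supportedIn T ↔ ∀ j, x j ≠ 0 → j ∈ T := by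
  simp [supportedIn]

lemma supportedIn_empty : supportedIn (∅ : Finset ι) = {(0 : ι → κ)} := by
  ext x
  simp [mem_supportedIn, funext_iff]

lemma sum_supportedIn_insert {M : Type*} [AddCommMonoid M] {a : ι} {T : Finset ι} (ha : a ∉ T)
    (φ : (ι → κ) → M) :
    ∑ x ∈ supportedIn (insert a T), φ x =
      ∑ s : κ, ∑ y ∈ supportedIn T, φ (Function.update y a s) := by
  rw [← Finset.sum_product']
  symm
  refine Finset.sum_nbij' (fun sy => Function.update sy.2 a sy.1)
    (fun x => (x a, Function.update x a 0)) ?_ ?_ ?_ ?_ fun _ _ => rfl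
  · rintro ⟨s, y⟩ hy
    simp only [Finset.mem_product, Finset.mem_univ, true_and, mem_supportedIn] at hy ⊢
    intro j hj
    rcases eq_or_ne j a with rfl | hja
    · exact Finset.mem_insert_self j T
    · rw [Function.update_of_ne hja] at hj
      exact Finset.mem_insert_of_mem (hy j hj)
  · intro x hx
    simp only [Finset.mem_product, Finset.mem_univ, true_and, mem_supportedIn] at hx ⊢
    intro j hj
    rcases eq_or_ne j a with rfl | hja
    · simp at hj
    · rw [Function.update_of_ne hja] at hj
      exact (Finset.mem_insert.mp (hx j hj)).resolve_left hja
  · rintro ⟨s, y⟩ hy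
    simp only [Finset.mem_product, Finset.mem_univ, true_and, mem_supportedIn] at hy
    have hya : y a = 0 := by_contra fun h => ha (hy a h)
    simp [← hya]
  · intro x _
    simp

lemma sum_supportedIn_noncommProd_eq_one {R : Type*} [Semiring R] (f : ι → κ → R)
    (T : Finset ι) (hcomm : ∀ j ∈ T, ∀ l ∈ T, ∀ s r, Commute (f j s) (f l r))
    (hsum : ∀ j ∈ T, ∑ s, f j s = 1) :
    ∑ x ∈ supportedIn T, T.noncommProd (fun j => f j (x j))
      (fun j hj l hl _ => hcomm j hj l hl _ _) = 1 := by
  induction T using Finset.induction_on with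
  | empty => simp [supportedIn_empty]
  | insert a T ha ih =>
    have hcommT : ∀ j ∈ T, ∀ l ∈ T, ∀ s r, Commute (f j s) (f l r) := fun j hj l hl =>
      hcomm j (Finset.mem_insert_of_mem hj) l (Finset.mem_insert_of_mem hl)
    have hsplit : ∀ (s : κ) (y : ι → κ),
        (insert a T).noncommProd (fun j => f j (Function.update y a s j))
            (fun j hj l hl _ => hcomm j hj l hl _ _) =
          f a s * T.noncommProd (fun j => f j (y j))
            (fun j hj l hl _ => hcommT j hj l hl _ _) := by
      intro s y
      refine (Finset.noncommProd_insert_of_notMem _ _ _ _ ha).trans ?_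
      rw [Function.update_self]
      congr 1
      exact Finset.noncommProd_congr rfl
        (fun j hj => by rw [Function.update_of_ne (ne_of_mem_of_not_mem hj ha)]) _
    simp only [sum_supportedIn_insert ha, hsplit, ← Finset.mul_sum,
      ih hcommT fun j hj => hsum j (Finset.mem_insert_of_mem hj), mul_one]
    exact hsum a (Finset.mem_insert_self a T)

end SupportedIn

lemma Ssol_eq_filter {p m n : ℕ} [NeZero p] (A : Matrix (Fin m) (Fin n) (ZMod p))
    (b : Fin m → ZMod p) (i : Fin m) :
    Ssol A b i = (supportedIn (Vset A i)).filter fun x => ∑ j, A i j * x j = b i := by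
  ext x
  simp [Ssol, mem_supportedIn, and_comm]

theorem statement14_general (p : ℕ) [Fact p.Prime] {m n : ℕ} (ω : ℂ) (hω : IsPrimitiveRoot ω p)
    (A : Matrix (Fin m) (Fin n) (ZMod p)) (b : Fin m → ZMod p)
    (i : Fin m) :
    ∑ x ∈ Ssol A b i, RingQuot.mkAlgHom ℂ (QuotRel ω p A b) (fprod ω A b i x) = 1 := by
  have hsum : ∑ x ∈ supportedIn (Vset A i), fprod ω A b i x = 1 :=
    sum_supportedIn_noncommProd_eq_one _ _ (fun j hj l hl => fj_commute ω hj hl)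
      fun j _ => sum_eigenProj hω _
  rw [Ssol_eq_filter, Finset.sum_filter_of_ne fun x _ hx => not_imp_comm.mp
    (mkAlgHom_fprod_eq_zero hω x) hx, ← map_sum, hsum, map_one]

/-- For each row `i` with `V_i` nonempty,
`∑_{x ∈ S_i(A,b)} ∏_{j ∈ V_i} f_j(x_j) = 1` in `ℂΓ(A,b)/⟨J-ω·1⟩`. -/
theorem statement14 (p : ℕ) [Fact p.Prime] {m n : ℕ} (ω : ℂ) (hω : IsPrimitiveRoot ω p)
    (A : Matrix (Fin m) (Fin n) (ZMod p)) (b : Fin m → ZMod p)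
    (i : Fin m) (hV : (Vset A i).Nonempty) :
    ∑ x ∈ Ssol A b i, RingQuot.mkAlgHom ℂ (QuotRel ω p A b) (fprod ω A b i x) = 1 :=
  statement14_general p ω hω A b i

end
end

section
/- Let p be a prime, A an m×n matrix over ℤ/p, b ∈ (ℤ/p)^m, and i, i' ∈ {1,…,m}. Suppose x ∈ S_i(A,b), x' ∈ S_{i'}(A,b), y ∈ S_i(A,0), y' ∈ S_{i'}(A,0). Then x+y ∈ S_i(A,b) and x'+y' ∈ S_{i'}(A,b); moreover, if (i,x) ~ (i',x') in G_{A,b} and (i,y) ≁ (i',y') in G_{A,0}, then (i,x+y) ~ (i',x'+y') in G_{A,b}. -/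
set_option maxHeartbeats 1000000
noncomputable section

section LinearSystem

variable {p m n : ℕ}

lemma add_mem_Ssol [NeZero p] {A : Matrix (Fin m) (Fin n) (ZMod p)} {b c : Fin m → ZMod p}
    {i : Fin m} {x y : Fin n → ZMod p} (hx : x ∈ Ssol A b i) (hy : y ∈ Ssol A c i) :
    x + y ∈ Ssol A (b + c) i := by
  simp only [Ssol, Finset.mem_filter, Finset.mem_univ, true_and] at hx hy ⊢
  obtain ⟨hx_eq, hx_supp⟩ := hx
  obtain ⟨hy_eq, hy_supp⟩ := hy
  refine ⟨?_, fun j hj => ?_⟩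
  · simp only [Pi.add_apply, mul_add, Finset.sum_add_distrib, hx_eq, hy_eq]
  · by_cases hxj : x j = 0
    · exact hy_supp j (by simpa [hxj] using hj)
    · exact hx_supp j hxj

lemma add_mem_Ssol_of_mem_Ssol_zero [NeZero p] {A : Matrix (Fin m) (Fin n) (ZMod p)}
    {b : Fin m → ZMod p} {i : Fin m} {x y : Fin n → ZMod p} (hx : x ∈ Ssol A b i)
    (hy : y ∈ Ssol A 0 i) : x + y ∈ Ssol A b i :=
  add_zero b ▸ add_mem_Ssol hx hy

lemma Incompat.add_of_not_incompat {A : Matrix (Fin m) (Fin n) (ZMod p)} {i k : Fin m}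
    {x x' y y' : Fin n → ZMod p} (hx : Incompat A i k x x') (hy : ¬ Incompat A i k y y') :
    Incompat A i k (x + y) (x' + y') := by
  obtain ⟨j, hj, hne⟩ := hx
  have hyj : y j = y' j := by
    by_contra h
    exact hy ⟨j, hj, h⟩
  exact ⟨j, hj, by simpa only [Pi.add_apply, hyj, ne_eq, add_left_inj] using hne⟩

end LinearSystem

/-- the vertex set of the graph `G_{A,b}`: pairs `(i,x)` with `x ∈ S_i(A,b)` -/
abbrev SyncGen {p m n : ℕ} [NeZero p] (A : Matrix (Fin m) (Fin n) (ZMod p))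
    (b : Fin m → ZMod p) : Type _ :=
  Σ i : Fin m, {x : Fin n → ZMod p // x ∈ Ssol A b i}

/-- the graph `G_{A,b}`: two vertices are adjacent iff they are incompatible solutions -/
def lsGraph {p m n : ℕ} [NeZero p] (A : Matrix (Fin m) (Fin n) (ZMod p))
    (b : Fin m → ZMod p) : SimpleGraph (SyncGen A b) where
  Adj v w := Incompat A v.1 w.1 v.2.1 w.2.1
  symm := ⟨fun _ _ h => h.symm⟩
  loopless := ⟨fun v h => by obtain ⟨j, _, hne⟩ := h; exact hne rfl⟩

/-- If `x ∈ S_i(A,b)`, `x' ∈ S_{i'}(A,b)`, `y ∈ S_i(A,0)`, `y' ∈ S_{i'}(A,0)`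
then `x+y ∈ S_i(A,b)` and `x'+y' ∈ S_{i'}(A,b)`; moreover if `(i,x) ~ (i',x')` in `G_{A,b}`
and `(i,y) ≁ (i',y')` in `G_{A,0}`, then `(i,x+y) ~ (i',x'+y')` in `G_{A,b}`. -/
theorem statement17 (p : ℕ) [Fact p.Prime] {m n : ℕ} (A : Matrix (Fin m) (Fin n) (ZMod p))
    (b : Fin m → ZMod p) (i i' : Fin m) (x x' y y' : Fin n → ZMod p)
    (hx : x ∈ Ssol A b i) (hx' : x' ∈ Ssol A b i')
    (hy : y ∈ Ssol A (0 : Fin m → ZMod p) i) (hy' : y' ∈ Ssol A (0 : Fin m → ZMod p) i') :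
    ∃ (h1 : x + y ∈ Ssol A b i) (h2 : x' + y' ∈ Ssol A b i'),
      ((lsGraph A b).Adj ⟨i, ⟨x, hx⟩⟩ ⟨i', ⟨x', hx'⟩⟩ →
       ¬ (lsGraph A (0 : Fin m → ZMod p)).Adj ⟨i, ⟨y, hy⟩⟩ ⟨i', ⟨y', hy'⟩⟩ →
       (lsGraph A b).Adj ⟨i, ⟨x + y, h1⟩⟩ ⟨i', ⟨x' + y', h2⟩⟩) :=
  ⟨add_mem_Ssol_of_mem_Ssol_zero hx hy, add_mem_Ssol_of_mem_Ssol_zero hx' hy',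
    Incompat.add_of_not_incompat⟩

end
end
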